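/- The function G₁ on the open unit ball {ξ ∈ ℝ³ : |ξ| < 1} defined by G₁(ξ) = 64π + 32π/(1−|ξ|²) − 48π |ξ|^{−1} log((1+|ξ|)/(1−|ξ|)) − 128π log(1−|ξ|²) for ξ ≠ 0 and G₁(0) = 0 is smooth and strictly convex on {ξ ∈ ℝ³ : |ξ| < 1}. -/

import Mathlib

open Real
open scoped Classical

/-- The leading-order reduced Willmore energy of on-center coordinate spheres:
`G₁(ξ) = 64π + 32π/(1−|ξ|²) − 48π|ξ|⁻¹ log((1+|ξ|)/(1−|ξ|)) − 128π log(1−|ξ|²)`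
for `ξ ≠ 0`, and `G₁(0) = 0`. -/
noncomputable def G1 (ξ : EuclideanSpace ℝ (Fin 3)) : ℝ :=
  if ξ = 0 then 0 else
    64 * π + 32 * π / (1 - ‖ξ‖ ^ 2)
      - 48 * π * ‖ξ‖⁻¹ * Real.log ((1 + ‖ξ‖) / (1 - ‖ξ‖))
      - 128 * π * Real.log (1 - ‖ξ‖ ^ 2)

/-!
In `t = ‖ξ‖²` the function `G₁` is the power series `∑ aₙ tⁿ` with `a₀ = 0` and
`aₙ = 32π - 96π/(2n+1) + 128π/n` for `n ≥ 1`, obtained by expanding `1/(1-t)`,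
`log((1+r)/(1-r)) / r` and `log(1-t)`. The coefficients are bounded, so the series is analytic
on `|t| < 1`, which gives smoothness. They are nonnegative with `a₁ > 0`, so on `[0, 1)` the series
is convex and strictly increasing, and composing it with the strictly convex `ξ ↦ ‖ξ‖²` gives
strict convexity.
-/

open Set Metric FormalMultilinearSeries

section PowerSeries

theorem one_le_radius_ofScalars_of_bounded {𝕜 E : Type*} [NontriviallyNormedField 𝕜]
    [NormedRing E] [NormedAlgebra 𝕜 E] [NormOneClass E] {c : ℕ → 𝕜} {C : ℝ}
    (hc : ∀ n, ‖c n‖ ≤ C) : 1 ≤ (ofScalars E c).radius := by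
  simpa using (ofScalars E c).le_radius_of_bound C (r := 1) fun n => by simpa using hc n

theorem analyticOnNhd_ofScalarsSum_of_bounded {𝕜 E : Type*} [NontriviallyNormedField 𝕜]
    [NormedRing E] [NormedAlgebra 𝕜 E] [NormOneClass E] [CompleteSpace E] {c : ℕ → 𝕜} {C : ℝ}
    (hc : ∀ n, ‖c n‖ ≤ C) : AnalyticOnNhd 𝕜 (ofScalarsSum (E := E) c) (ball 0 1) :=
  (ofScalars E c).analyticOnNhd.mono fun x hx => by
    rw [Metric.mem_eball, edist_zero_right]
    refine lt_of_lt_of_le ?_ (one_le_radius_ofScalars_of_bounded hc)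
    simpa [← ENNReal.coe_one, enorm_eq_nnnorm, ← NNReal.coe_lt_coe] using mem_ball_zero_iff.1 hx

theorem summable_mul_pow_of_bounded {c : ℕ → ℝ} {C t : ℝ} (hc : ∀ n, |c n| ≤ C) (ht : |t| < 1) :
    Summable fun n => c n * t ^ n :=
  .of_norm_bounded ((summable_geometric_of_lt_one (abs_nonneg t) ht).mul_left C) fun n => by
    rw [norm_mul, norm_pow, Real.norm_eq_abs, Real.norm_eq_abs]
    exact mul_le_mul_of_nonneg_right (hc n) (by positivity)

variable {c : ℕ → ℝ} {s : Set ℝ}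

theorem convexOn_tsum_mul_pow (hc : ∀ n, 0 ≤ c n) (hs : Convex ℝ s) (hs₀ : s ⊆ Ici 0)
    (hsum : ∀ t ∈ s, Summable fun n => c n * t ^ n) :
    ConvexOn ℝ s fun t => ∑' n, c n * t ^ n := by
  refine ⟨hs, fun x hx y hy a b ha hb hab => ?_⟩
  have hterm (n : ℕ) : c n * (a * x + b * y) ^ n ≤ a * (c n * x ^ n) + b * (c n * y ^ n) := by
    have := mul_le_mul_of_nonneg_left
      ((convexOn_pow n).2 (hs₀ hx) (hs₀ hy) ha hb hab) (hc n)
    simp only [smul_eq_mul] at this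
    linarith
  simp only [smul_eq_mul]
  rw [← tsum_mul_left, ← tsum_mul_left,
    ← ((hsum x hx).mul_left a).tsum_add ((hsum y hy).mul_left b)]
  exact (hsum _ (by simpa using hs hx hy ha hb hab)).tsum_le_tsum hterm
    (((hsum x hx).mul_left a).add ((hsum y hy).mul_left b))

theorem strictMonoOn_tsum_mul_pow (hc : ∀ n, 0 ≤ c n) {k : ℕ} (hk : k ≠ 0) (hck : 0 < c k)
    (hs₀ : s ⊆ Ici 0) (hsum : ∀ t ∈ s, Summable fun n => c n * t ^ n) :
    StrictMonoOn (fun t => ∑' n, c n * t ^ n) s := fun x hx y hy hxy =>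
  (hsum x hx).tsum_lt_tsum (i := k)
    (fun n => mul_le_mul_of_nonneg_left (pow_le_pow_left₀ (hs₀ hx) hxy.le n) (hc n))
    (mul_lt_mul_of_pos_left (pow_lt_pow_left₀ hxy (hs₀ hx) hk) hck) (hsum y hy)

end PowerSeries

theorem strictConvexOn_norm_sq {E : Type*} [NormedAddCommGroup E] [InnerProductSpace ℝ E] :
    StrictConvexOn ℝ univ fun x : E => ‖x‖ ^ 2 := by
  refine ⟨convex_univ, fun x _ y _ hxy a b ha hb hab => ?_⟩
  have hxy' : 0 < ‖x - y‖ ^ 2 := by positivity [sub_ne_zero.2 hxy]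
  have key : ‖a • x + b • y‖ ^ 2 = a * ‖x‖ ^ 2 + b * ‖y‖ ^ 2 - a * b * ‖x - y‖ ^ 2 := by
    rw [norm_add_sq_real, norm_sub_sq_real, norm_smul, norm_smul, real_inner_smul_left,
      real_inner_smul_right, Real.norm_of_nonneg ha.le, Real.norm_of_nonneg hb.le,
      show b = 1 - a by linarith]
    ring
  simp only [smul_eq_mul, key]
  nlinarith [mul_pos (mul_pos ha hb) hxy']

-- The `n = 0` term is `1 / 0 = 0`.
theorem hasSum_pow_div_natCast {t : ℝ} (ht : |t| < 1) :
    HasSum (fun n : ℕ => t ^ n / n) (-log (1 - t)) := by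
  rw [← hasSum_nat_add_iff' 1]
  simpa using hasSum_pow_div_log_of_abs_lt_one ht

theorem hasSum_sq_pow_div_two_mul_add_one {r : ℝ} (hr₀ : r ≠ 0) (hr : |r| < 1) :
    HasSum (fun n : ℕ => (r ^ 2) ^ n / (2 * n + 1)) ((log (1 + r) - log (1 - r)) / (2 * r)) := by
  refine ((hasSum_log_sub_log_of_abs_lt_one hr).div_const (2 * r)).congr_fun fun n => ?_
  rw [pow_succ r (2 * n), pow_mul]
  field_simp

noncomputable def g1Coeff (n : ℕ) : ℝ :=
  if n = 0 then 0 else 32 * π - 96 * π / (2 * n + 1) + 128 * π / n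

theorem g1Coeff_nonneg (n : ℕ) : 0 ≤ g1Coeff n := by
  unfold g1Coeff
  split_ifs with hn
  · rfl
  · have hn : (1 : ℝ) ≤ n := by exact_mod_cast Nat.one_le_iff_ne_zero.2 hn
    have : 96 * π / (2 * n + 1) ≤ 32 * π := by
      rw [div_le_iff₀ (by positivity)]
      nlinarith [pi_pos]
    have : 0 ≤ 128 * π / n := by positivity
    linarith

theorem abs_g1Coeff_le (n : ℕ) : |g1Coeff n| ≤ 160 * π := by
  rw [abs_of_nonneg (g1Coeff_nonneg n), g1Coeff]
  split_ifs with hn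
  · positivity
  · have hn : (1 : ℝ) ≤ n := by exact_mod_cast Nat.one_le_iff_ne_zero.2 hn
    have : 128 * π / n ≤ 128 * π := div_le_self (by positivity) hn
    have : 0 ≤ 96 * π / (2 * n + 1) := by positivity
    linarith

theorem g1Coeff_one : g1Coeff 1 = 128 * π := by
  norm_num [g1Coeff]
  ring

theorem hasSum_g1Coeff_mul_sq_pow {r : ℝ} (hr₀ : 0 < r) (hr : r < 1) :
    HasSum (fun n => g1Coeff n * (r ^ 2) ^ n)
      (64 * π + 32 * π / (1 - r ^ 2) - 48 * π * r⁻¹ * log ((1 + r) / (1 - r))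
        - 128 * π * log (1 - r ^ 2)) := by
  have hr' : |r| < 1 := by rwa [abs_of_pos hr₀]
  have ht : |r ^ 2| < 1 := by rw [abs_pow]; exact pow_lt_one₀ (abs_nonneg r) hr' two_ne_zero
  have hsum := ((((hasSum_geometric_of_abs_lt_one ht).mul_left (32 * π)).sub
    ((hasSum_sq_pow_div_two_mul_add_one hr₀.ne' hr').mul_left (96 * π))).add
    ((hasSum_pow_div_natCast ht).mul_left (128 * π))).add (hasSum_ite_eq 0 (64 * π))
  have hclosed : 64 * π + 32 * π / (1 - r ^ 2) - 48 * π * r⁻¹ * log ((1 + r) / (1 - r))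
      - 128 * π * log (1 - r ^ 2) = 32 * π * (1 - r ^ 2)⁻¹
      - 96 * π * ((log (1 + r) - log (1 - r)) / (2 * r)) + 128 * π * -log (1 - r ^ 2) + 64 * π := by
    rw [log_div (by linarith) (by linarith)]
    field_simp
    ring
  rw [hclosed]
  refine hsum.congr_fun fun n => ?_
  rcases eq_or_ne n 0 with rfl | hn
  · norm_num [g1Coeff]
    ring
  · simp only [g1Coeff, if_neg hn]
    ring

theorem G1_eq_tsum_g1Coeff_mul_pow {ξ : EuclideanSpace ℝ (Fin 3)} (hξ : ξ ∈ ball 0 1) :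
    G1 ξ = ∑' n, g1Coeff n * (‖ξ‖ ^ 2) ^ n := by
  rw [mem_ball_zero_iff] at hξ
  rcases eq_or_ne ξ 0 with rfl | hξ₀
  · simp +contextual [G1, g1Coeff]
  · rw [G1, if_neg hξ₀, (hasSum_g1Coeff_mul_sq_pow (norm_pos_iff.2 hξ₀) hξ).tsum_eq]

/-- `G₁` is smooth and strictly convex on the open unit ball of `ℝ³`. -/
theorem stmt10 :
    ContDiffOn ℝ (⊤ : ℕ∞) G1 (Metric.ball 0 1) ∧
    StrictConvexOn ℝ (Metric.ball (0 : EuclideanSpace ℝ (Fin 3)) 1) G1 := by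
  set F := fun t : ℝ => ∑' n, g1Coeff n * t ^ n
  set q := fun ξ : EuclideanSpace ℝ (Fin 3) => ‖ξ‖ ^ 2
  have hG1 : EqOn G1 (F ∘ q) (ball 0 1) := fun ξ hξ => G1_eq_tsum_g1Coeff_mul_pow hξ
  have hq : MapsTo q (ball 0 1) (ball 0 1) := fun ξ hξ => by
    simpa [q] using pow_lt_one₀ (norm_nonneg ξ) (mem_ball_zero_iff.1 hξ) two_ne_zero
  have hsum : ∀ t ∈ q '' ball 0 1, Summable fun n => g1Coeff n * t ^ n := fun t ht =>
    summable_mul_pow_of_bounded abs_g1Coeff_le (mem_ball_zero_iff.1 (hq.image_subset ht))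
  have hnonneg : q '' ball 0 1 ⊆ Ici 0 := by
    rintro _ ⟨ξ, -, rfl⟩
    exact sq_nonneg ‖ξ‖
  constructor
  · have hF : ContDiffOn ℝ (⊤ : ℕ∞) F (ball 0 1) := by
      simpa [ofScalarsSum_eq_tsum] using (analyticOnNhd_ofScalarsSum_of_bounded (E := ℝ)
        fun n => (norm_eq_abs _).trans_le (abs_g1Coeff_le n)).contDiffOn_of_completeSpace
    exact (hF.comp (contDiff_norm_sq ℝ).contDiffOn hq).congr hG1
  · have hconvex : Convex ℝ (q '' ball 0 1) :=
      ((convex_ball 0 1).isPreconnected.image q (by fun_prop)).convex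
    refine (ConvexOn.comp_strictConvexOn
      (convexOn_tsum_mul_pow g1Coeff_nonneg hconvex hnonneg hsum)
      (strictConvexOn_norm_sq.subset (subset_univ _) (convex_ball 0 1))
      (strictMonoOn_tsum_mul_pow g1Coeff_nonneg one_ne_zero ?_ hnonneg hsum)).congr hG1.symm
    rw [g1Coeff_one]
    positivity
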